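/- arXiv:1105.2042 — 3 statements merged into one kernel-verified Lean document; each statement's English description precedes it below -/
import Mathlib

section
/- (Hurwitz) If ξ is an irrational real number, then there exist infinitely many distinct rational numbers p/q (with integers p and q ≥ 1) such that |ξ − p/q| < 1/(√5 · q²). -/
private lemma hw_sqrt5_irr : Irrational (Real.sqrt 5) := by
  have h : Nat.Prime 5 := by norm_num
  simpa using h.irrational_sqrt

private lemma hw_s_pos : (0:ℝ) < Real.sqrt 5 := Real.sqrt_pos.mpr (by norm_num)

private lemma hw_s_gt : (2:ℝ) < Real.sqrt 5 := by
  nlinarith [Real.sq_sqrt (by norm_num : (0:ℝ) ≤ 5), hw_s_pos]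

/-- strictness from irrationality of √5 -/
private lemma hw_strict {b d : ℤ} (hb : 0 < b) (hd : 0 < d)
    (h : (b:ℝ)^2 + (d:ℝ)^2 ≤ Real.sqrt 5 * b * d) :
    (b:ℝ)^2 + (d:ℝ)^2 < Real.sqrt 5 * b * d := by
  rcases lt_or_eq_of_le h with h' | h'
  · exact h'
  · exfalso
    apply hw_sqrt5_irr
    refine ⟨((b:ℚ)^2 + (d:ℚ)^2) / ((b:ℚ) * d), ?_⟩
    have hb' : (b:ℝ) ≠ 0 := by positivity
    have hd' : (d:ℝ) ≠ 0 := by positivity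
    push_cast
    field_simp
    linarith [h']

private lemma hw_core {b d : ℤ} (hb : 0 < b) (hd : 0 < d)
    (h1 : (b:ℝ)^2 + (d:ℝ)^2 ≤ Real.sqrt 5 * b * d)
    (h2 : (b:ℝ)^2 + ((b:ℝ)+d)^2 ≤ Real.sqrt 5 * b * ((b:ℝ)+d)) : False := by
  set s := Real.sqrt 5 with hs
  have hs5 : s^2 = 5 := Real.sq_sqrt (by norm_num)
  have hs2 : 2 < s := hw_s_gt
  have hx : (1:ℝ) ≤ b := by exact_mod_cast hb
  have hy : (1:ℝ) ≤ d := by exact_mod_cast hd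
  have h1' := hw_strict hb hd h1
  have h2' : (b:ℝ)^2 + ((b:ℝ)+d)^2 < s * b * ((b:ℝ)+d) := by
    have := hw_strict hb (by omega : 0 < b + d) (by push_cast; nlinarith)
    push_cast at this; nlinarith
  set x := (b:ℝ); set y := (d:ℝ)
  have a1 : 2*x < (s+1)*y := by nlinarith [sq_nonneg (2*x - s*y - y), sq_nonneg (2*x - s*y)]
  have a2 : 2*(x+y) < (s+1)*x := by nlinarith [sq_nonneg (2*(x+y) - s*x - x)]
  nlinarith [mul_lt_mul_of_pos_left a1 (by linarith : (0:ℝ) < s - 1)]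

private lemma hw_clear {B D s : ℝ} (hB : 0 < B) (hD : 0 < D) (hs : 0 < s)
    (h : 1/(s*B^2) + 1/(s*D^2) ≤ 1/(B*D)) : B^2 + D^2 ≤ s*B*D := by
  rw [div_add_div _ _ (by positivity) (by positivity),
    div_le_div_iff₀ (by positivity) (by positivity)] at h
  nlinarith [mul_pos hB hD, mul_pos (mul_pos hs hB) hD]

/-- Among the three candidates a/b, c/d, mediant, one satisfies the Hurwitz bound. -/
private lemma hw_three (ξ : ℝ) (hξ : Irrational ξ) {a b c d : ℤ}
    (hb : 0 < b) (hd : 0 < d) (hdet : b*c - a*d = 1)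
    (hl : (a:ℝ)/b < ξ) (hr : ξ < (c:ℝ)/d) :
    ∃ p q : ℤ, 0 < q ∧ (a:ℝ)/b ≤ (p:ℝ)/q ∧ (p:ℝ)/q ≤ (c:ℝ)/d ∧
      |ξ - (p:ℝ)/q| < 1/(Real.sqrt 5 * (q:ℝ)^2) := by
  by_contra hno
  push_neg at hno
  set s := Real.sqrt 5 with hs
  have hB : (0:ℝ) < (b:ℝ) := by exact_mod_cast hb
  have hD : (0:ℝ) < (d:ℝ) := by exact_mod_cast hd
  have hBD : (0:ℝ) < (b:ℝ) + d := by linarith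
  have hdetR : (b:ℝ)*c - a*d = 1 := by exact_mod_cast hdet
  set A := (a:ℝ); set B := (b:ℝ); set C := (c:ℝ); set D := (d:ℝ)
  set M : ℝ := (A + C)/(B + D) with hM
  have e1 : C/D - A/B = 1/(B*D) := by
    have h : C/D - A/B = (B*C - A*D)/(B*D) := by field_simp
    rw [h, hdetR]
  have e2 : M - A/B = 1/(B*(B+D)) := by
    have h : M - A/B = (B*C - A*D)/(B*(B+D)) := by rw [hM]; field_simp; ring
    rw [h, hdetR]
  have e3 : C/D - M = 1/(D*(B+D)) := by
    have h : C/D - M = (B*C - A*D)/(D*(B+D)) := by rw [hM]; field_simp; ring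
    rw [h, hdetR]
  have hm1 : A/B ≤ M := by
    have : (0:ℝ) < 1/(B*(B+D)) := by positivity
    linarith
  have hm2 : M ≤ C/D := by
    have : (0:ℝ) < 1/(D*(B+D)) := by positivity
    linarith
  have hac : A/B ≤ C/D := le_trans hm1 hm2
  -- the three failures
  have F1 : 1/(s*B^2) ≤ ξ - A/B := by
    have h := hno a b hb le_rfl hac
    rwa [abs_of_pos (by linarith)] at h
  have F3 : 1/(s*D^2) ≤ C/D - ξ := by
    have h := hno c d hd hac le_rfl
    rwa [abs_sub_comm, abs_of_pos (by linarith)] at h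
  have FM : 1/(s*(B+D)^2) ≤ |ξ - M| := by
    have h2 := hno (a+c) (b+d) (by omega)
      (by push_cast; exact hm1) (by push_cast; exact hm2)
    push_cast at h2
    convert h2 using 3 <;> push_cast <;> ring
  -- first cleared inequality
  have ineq1 : B^2 + D^2 ≤ s*B*D := by
    apply hw_clear hB hD hw_s_pos
    have : 1/(s*B^2) + 1/(s*D^2) ≤ C/D - A/B := by linarith
    linarith [e1]
  have hξM : ξ ≠ M := by
    intro hEq
    exact hξ ⟨((a:ℚ)+c)/((b:ℚ)+d), by rw [hEq, hM]; push_cast; ring⟩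
  rcases lt_or_gt_of_ne hξM with hlt | hgt
  · -- ξ < M : pair (b, b+d)
    have FM' : 1/(s*(B+D)^2) ≤ M - ξ := by rwa [abs_sub_comm, abs_of_pos (by linarith)] at FM
    have ineq2 : B^2 + (B+D)^2 ≤ s*B*(B+D) := by
      apply hw_clear hB hBD hw_s_pos
      have : 1/(s*B^2) + 1/(s*(B+D)^2) ≤ M - A/B := by linarith
      linarith [e2]
    exact hw_core hb hd ineq1 ineq2
  · -- M < ξ : pair (d, b+d)
    have FM' : 1/(s*(B+D)^2) ≤ ξ - M := by rwa [abs_of_pos (by linarith)] at FM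
    have ineq2 : D^2 + (D+B)^2 ≤ s*D*(D+B) := by
      have : D^2 + (B+D)^2 ≤ s*D*(B+D) := by
        apply hw_clear hD hBD hw_s_pos
        have : 1/(s*D^2) + 1/(s*(B+D)^2) ≤ C/D - M := by linarith
        linarith [e3]
      have hc : (B:ℝ)+D = D+B := by ring
      rw [← hc] at *; linarith [this]
    exact hw_core hd hb (by linarith [ineq1]) (by linarith [ineq2])

/-- Good Stern–Brocot pairs exist with arbitrarily large denominator sum. -/
private lemma hw_good (ξ : ℝ) (hξ : Irrational ξ) (n : ℕ) :
    ∃ a b c d : ℤ, 0 < b ∧ 0 < d ∧ b*c - a*d = 1 ∧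
      (a:ℝ)/b < ξ ∧ ξ < (c:ℝ)/d ∧ (n:ℤ) ≤ b + d := by
  induction n with
  | zero =>
    refine ⟨⌊ξ⌋, 1, ⌊ξ⌋+1, 1, one_pos, one_pos, by ring, ?_, ?_, by omega⟩
    · rw [Int.cast_one, div_one]
      exact (Int.floor_le ξ).lt_of_ne (by simpa using (hξ.ne_int ⌊ξ⌋).symm)
    · rw [Int.cast_one, div_one]; push_cast
      exact Int.lt_floor_add_one ξ
  | succ n ih =>
    obtain ⟨a, b, c, d, hb, hd, hdet, hl, hr, hsum⟩ := ih
    have hBD : (0:ℝ) < (b:ℝ) + d := by positivity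
    have hξM : ξ ≠ ((a:ℝ)+c)/((b:ℝ)+d) := by
      intro hEq
      exact hξ ⟨((a:ℚ)+c)/((b:ℚ)+d), by rw [hEq]; push_cast; ring⟩
    rcases lt_or_gt_of_ne hξM with hlt | hgt
    · refine ⟨a, b, a+c, b+d, hb, by omega, by linear_combination hdet,
        hl, by push_cast; exact hlt, by omega⟩
    · refine ⟨a+c, b+d, c, d, by omega, hd, by linear_combination hdet,
        by push_cast; exact hgt, hr, by omega⟩

/-- For every n ≥ 1 there is a member of the Hurwitz set within 2/n of ξ. -/
private lemma hw_approx (ξ : ℝ) (hξ : Irrational ξ) (n : ℕ) (hn : 0 < n) :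
    ∃ r : ℚ, |ξ - (r:ℝ)| < 1/(Real.sqrt 5 * (r.den : ℝ)^2) ∧ |ξ - (r:ℝ)| < 2/n := by
  obtain ⟨a, b, c, d, hb, hd, hdet, hl, hr, hsum⟩ := hw_good ξ hξ n
  obtain ⟨p, q, hq, hp1, hp2, hclose⟩ := hw_three ξ hξ hb hd hdet hl hr
  refine ⟨(p:ℚ)/(q:ℚ), ?_, ?_⟩
  · -- reduce denominator only helps
    have hden : ((((p:ℚ)/(q:ℚ)).den : ℤ)) ≤ q := by
      rw [← Rat.divInt_eq_div]; exact Int.le_of_dvd hq (Rat.den_dvd p q)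
    have hdpos : (0:ℝ) < ((((p:ℚ)/(q:ℚ)).den : ℕ) : ℝ) := by
      exact_mod_cast (((p:ℚ)/(q:ℚ)).pos)
    have hden' : ((((p:ℚ)/(q:ℚ)).den : ℕ) : ℝ) ≤ (q:ℝ) := by exact_mod_cast hden
    have hmono : 1/(Real.sqrt 5 * (q:ℝ)^2)
        ≤ 1/(Real.sqrt 5 * ((((p:ℚ)/(q:ℚ)).den : ℕ) : ℝ)^2) := by
      apply one_div_le_one_div_of_le (by positivity)
      have hsq : ((((p:ℚ)/(q:ℚ)).den : ℕ) : ℝ)^2 ≤ (q:ℝ)^2 := by nlinarith [hden', hdpos]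
      exact mul_le_mul_of_nonneg_left hsq hw_s_pos.le
    have hcast : (((p:ℚ)/(q:ℚ) : ℚ) : ℝ) = (p:ℝ)/q := by push_cast; ring
    rw [hcast]
    exact lt_of_lt_of_le hclose hmono
  · have hcast : (((p:ℚ)/(q:ℚ) : ℚ) : ℝ) = (p:ℝ)/q := by push_cast; ring
    rw [hcast]
    have hB : (0:ℝ) < (b:ℝ) := by exact_mod_cast hb
    have hD : (0:ℝ) < (d:ℝ) := by exact_mod_cast hd
    have hdetR : (b:ℝ)*c - a*d = 1 := by exact_mod_cast hdet
    have e1 : (c:ℝ)/d - (a:ℝ)/b = 1/((b:ℝ)*d) := by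
      have h : (c:ℝ)/d - (a:ℝ)/b = ((b:ℝ)*c - a*d)/((b:ℝ)*d) := by field_simp
      rw [h, hdetR]
    have habs : |ξ - (p:ℝ)/q| < 1/((b:ℝ)*d) := by
      rw [abs_lt]; constructor <;> [linarith [e1]; linarith [e1]]
    have hB1 : (1:ℝ) ≤ (b:ℝ) := by exact_mod_cast hb
    have hD1 : (1:ℝ) ≤ (d:ℝ) := by exact_mod_cast hd
    have hsum' : (n:ℝ) ≤ (b:ℝ) + d := by exact_mod_cast hsum
    have h2 : 1/((b:ℝ)*d) ≤ 2/((b:ℝ)+d) := by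
      rw [div_le_div_iff₀ (by positivity) (by positivity)]
      nlinarith
    have h3 : 2/((b:ℝ)+d) ≤ 2/(n:ℝ) := by
      apply div_le_div_of_nonneg_left (by norm_num) (by exact_mod_cast hn) hsum'
    linarith

/-- (Hurwitz) If `ξ` is irrational, then there are infinitely many distinct
rational numbers `p/q` with `|ξ − p/q| < 1/(√5 q²)`; here each rational `r` is
written with its (reduced) denominator `r.den ≥ 1`. -/
theorem hurwitz (ξ : ℝ) (hξ : Irrational ξ) :
    {r : ℚ | |ξ - (r : ℝ)| < 1 / (Real.sqrt 5 * (r.den : ℝ) ^ 2)}.Infinite := by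
  set S := {r : ℚ | |ξ - (r : ℝ)| < 1 / (Real.sqrt 5 * (r.den : ℝ) ^ 2)} with hS
  by_contra hfin
  rw [Set.not_infinite] at hfin
  have hex : ∃ δ : ℝ, 0 < δ ∧ ∀ r ∈ S, δ ≤ |ξ - (r:ℝ)| := by
    rcases S.eq_empty_or_nonempty with h | h
    · exact ⟨1, one_pos, by simp [h]⟩
    · obtain ⟨r0, hr0, hmin⟩ := Set.exists_min_image S (fun r => |ξ - (r:ℝ)|) hfin h
      refine ⟨|ξ - (r0:ℝ)|, ?_, hmin⟩
      have hne : ξ ≠ (r0:ℝ) := fun h => hξ ⟨r0, h.symm⟩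
      exact abs_pos.mpr (sub_ne_zero.mpr hne)
  obtain ⟨δ, hδ, hmin⟩ := hex
  obtain ⟨n, hn⟩ := exists_nat_gt (2/δ)
  have hn0 : 0 < n := by
    by_contra h
    push_neg at h
    interval_cases n
    · simp at hn; nlinarith [div_pos (by norm_num : (0:ℝ) < 2) hδ]
  obtain ⟨r, hr1, hr2⟩ := hw_approx ξ hξ n hn0
  have hrS : r ∈ S := hr1
  have h2n : 2/(n:ℝ) < δ := by
    rw [div_lt_iff₀ (by exact_mod_cast hn0)]
    rw [div_lt_iff₀ hδ] at hn
    nlinarith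
  linarith [hmin r hrS, hr2]
end

section
/- (Criterion for p-adic irrationality) Fix a prime ℓ and let ξ be an element of the field ℚ_ℓ of ℓ-adic numbers. Suppose there exist δ > 0 and a sequence of rational numbers p_n/q_n (with integers p_n and q_n ≥ 1) such that p_n/q_n ≠ ξ for all n, q_n → ∞ as n → ∞, and the ℓ-adic absolute value satisfies ‖ξ − p_n/q_n‖_ℓ ≤ 1/(max{|p_n|, |q_n|})^{1+δ} for all n. Then ξ is not a rational number, i.e. ξ does not lie in the image of ℚ inside ℚ_ℓ. -/
/-!
If `ξ = a / b` were rational, then for every `p / q ≠ ξ` the difference `ξ - p / q` is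
`(a q - b p) / (b q)` with a nonzero integer numerator, and a nonzero integer `N` has
`‖N‖_ℓ ≥ 1 / |N|`. Hence `‖ξ - p / q‖_ℓ ≥ 1 / (C · max (|p|, q))` with `C = |a| + b`, so
rationals are approximable only to exponent `1`: the hypothesis forces `max (|p|, q) ^ δ ≤ C`,
which fails once `q` is large.
-/

open Filter

namespace Padic

variable {ℓ : ℕ} [Fact ℓ.Prime]

theorem inv_abs_le_norm_intCast {m : ℤ} (hm : m ≠ 0) : |(m : ℝ)|⁻¹ ≤ ‖(m : ℚ_[ℓ])‖ := by
  have hℓ : (0 : ℝ) < ℓ := mod_cast (Fact.out : ℓ.Prime).pos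
  have hpow_le : (ℓ : ℤ) ^ padicValInt ℓ m ≤ |m| :=
    Int.le_of_dvd (abs_pos.mpr hm) ((dvd_abs _ _).mpr (padicValInt_dvd m))
  rw [norm_eq_zpow_neg_valuation (mod_cast hm), valuation_intCast, zpow_neg, zpow_natCast]
  exact inv_anti₀ (pow_pos hℓ _) (mod_cast hpow_le)

theorem inv_abs_le_norm_div_sub_div {a p : ℤ} {b q : ℕ} (hb : b ≠ 0) (hq : q ≠ 0)
    (hne : a * q - b * p ≠ 0) :
    |((a * q - b * p : ℤ) : ℝ)|⁻¹ ≤ ‖(a : ℚ_[ℓ]) / b - p / q‖ := by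
  have hdiff : (a : ℚ_[ℓ]) / b - p / q = ((a * q - b * p : ℤ) : ℚ_[ℓ]) / ((b * q : ℤ) : ℚ_[ℓ]) := by
    push_cast
    field_simp
  have hden : 0 < ‖((b * q : ℤ) : ℚ_[ℓ])‖ := norm_pos_iff.mpr (by simp [hb, hq])
  rw [hdiff, norm_div]
  exact (inv_abs_le_norm_intCast hne).trans (le_div_self (norm_nonneg _) hden (norm_int_le_one _))

theorem inv_mul_max_le_norm_ratCast_sub_div (r : ℚ) {p : ℤ} {q : ℕ} (hq : q ≠ 0)
    (hne : (p : ℚ_[ℓ]) / q ≠ r) :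
    ((|(r.num : ℝ)| + r.den) * max |(p : ℝ)| q)⁻¹ ≤ ‖(r : ℚ_[ℓ]) - p / q‖ := by
  have hr : (r : ℚ_[ℓ]) = (r.num : ℚ_[ℓ]) / r.den := by
    rw [← Rat.cast_intCast, ← Rat.cast_natCast, ← Rat.cast_div, Rat.num_div_den]
  have hN : r.num * q - r.den * p ≠ 0 := by
    refine fun h ↦ hne ?_
    rw [hr, div_eq_div_iff (mod_cast hq) (mod_cast r.den_ne_zero)]
    exact_mod_cast (by linarith : p * r.den = r.num * q)
  have habs : |((r.num * q - r.den * p : ℤ) : ℝ)| ≤ (|(r.num : ℝ)| + r.den) * max |(p : ℝ)| q := by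
    push_cast
    calc |(r.num : ℝ) * q - r.den * p| ≤ |(r.num : ℝ)| * q + r.den * |(p : ℝ)| := by
          simpa [abs_mul] using abs_sub (r.num * (q : ℝ)) (r.den * p)
      _ ≤ |(r.num : ℝ)| * max |(p : ℝ)| q + r.den * max |(p : ℝ)| q := by
          gcongr
          · exact le_max_right _ _
          · exact le_max_left _ _
      _ = _ := by ring
  rw [hr]
  exact (inv_anti₀ (abs_pos.mpr (mod_cast hN)) habs).trans
    (inv_abs_le_norm_div_sub_div r.den_ne_zero hq hN)

end Padic

theorem padic_irrationality_criterion_general (ℓ : ℕ) [Fact ℓ.Prime] (ξ : ℚ_[ℓ])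
    (δ : ℝ) (hδ : 0 < δ) (p : ℕ → ℤ) (q : ℕ → ℕ)
    (hne : ∀ n, ((p n : ℚ_[ℓ]) / (q n : ℚ_[ℓ])) ≠ ξ)
    (hqtop : Filter.Tendsto q Filter.atTop Filter.atTop)
    (hbound : ∀ n, ‖ξ - (p n : ℚ_[ℓ]) / (q n : ℚ_[ℓ])‖
      ≤ 1 / (max (|p n| : ℝ) (q n : ℝ)) ^ ((1 : ℝ) + δ)) :
    ¬ ∃ r : ℚ, ξ = (r : ℚ_[ℓ]) := by
  rintro ⟨r, rfl⟩
  set C : ℝ := |(r.num : ℝ)| + r.den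
  set H : ℕ → ℝ := fun n ↦ max (|p n| : ℝ) (q n : ℝ)
  have hH : Tendsto H atTop atTop :=
    tendsto_atTop_mono (fun n ↦ le_max_right _ _) (tendsto_natCast_atTop_atTop.comp hqtop)
  obtain ⟨n, hCH, hq⟩ := (((tendsto_rpow_atTop hδ).comp hH).eventually_gt_atTop C |>.and
    (hqtop.eventually_ge_atTop 1)).exists
  have hHpos : 0 < H n := lt_of_lt_of_le (by exact_mod_cast hq) (le_max_right _ _)
  have hbounds : (C * H n)⁻¹ ≤ (H n * H n ^ δ)⁻¹ := by
    have := (Padic.inv_mul_max_le_norm_ratCast_sub_div r (by omega) (hne n)).trans (hbound n)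
    rwa [Real.rpow_add hHpos, Real.rpow_one, one_div] at this
  rw [inv_le_inv₀ (by positivity) (by positivity), mul_comm C] at hbounds
  exact hCH.not_ge (le_of_mul_le_mul_left hbounds hHpos)

/-- (Criterion for `ℓ`-adic irrationality) Let `ℓ` be a prime and `ξ ∈ ℚ_ℓ`.
If there are `δ > 0` and sequences `p : ℕ → ℤ`, `q : ℕ → ℕ` with `q n ≥ 1`,
`p n / q n ≠ ξ` for all `n`, `q n → ∞`, and
`‖ξ − p n / q n‖_ℓ ≤ 1/(max |p n| (q n))^(1+δ)` for all `n`, then `ξ` is not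
the image of a rational number in `ℚ_ℓ`. -/
theorem padic_irrationality_criterion (ℓ : ℕ) [Fact ℓ.Prime] (ξ : ℚ_[ℓ])
    (δ : ℝ) (hδ : 0 < δ) (p : ℕ → ℤ) (q : ℕ → ℕ)
    (hq1 : ∀ n, 1 ≤ q n)
    (hne : ∀ n, ((p n : ℚ_[ℓ]) / (q n : ℚ_[ℓ])) ≠ ξ)
    (hqtop : Filter.Tendsto q Filter.atTop Filter.atTop)
    (hbound : ∀ n, ‖ξ - (p n : ℚ_[ℓ]) / (q n : ℚ_[ℓ])‖
      ≤ 1 / (max (|p n| : ℝ) (q n : ℝ)) ^ ((1 : ℝ) + δ)) :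
    ¬ ∃ r : ℚ, ξ = (r : ℚ_[ℓ]) :=
  padic_irrationality_criterion_general ℓ ξ δ hδ p q hne hqtop hbound
end

section
/- Let ξ be an irrational real number and let p/q and r/s be fractions with integers p, r and positive integers q, s such that p/q < ξ < r/s and qr − ps = 1. Then min{ q²(ξ − p/q), s²(r/s − ξ) } < 1/2. -/
/-- If `ξ` is irrational and `p/q < ξ < r/s` with `q, s ≥ 1` and `qr − ps = 1`,
then `min{q²(ξ − p/q), s²(r/s − ξ)} < 1/2`. -/
theorem min_lt_half (ξ : ℝ) (hξ : Irrational ξ) (p r : ℤ) (q s : ℤ)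
    (hq : 0 < q) (hs : 0 < s)
    (h1 : (p : ℝ) / (q : ℝ) < ξ) (h2 : ξ < (r : ℝ) / (s : ℝ))
    (h3 : q * r - p * s = 1) :
    min ((q : ℝ) ^ 2 * (ξ - (p : ℝ) / (q : ℝ)))
        ((s : ℝ) ^ 2 * ((r : ℝ) / (s : ℝ) - ξ)) < 1 / 2 := by
  by_contra hcon
  push_neg at hcon
  rw [le_min_iff] at hcon
  obtain ⟨ha, hb⟩ := hcon
  have hqR : (0:ℝ) < (q:ℝ) := by exact_mod_cast hq
  have hsR : (0:ℝ) < (s:ℝ) := by exact_mod_cast hs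
  have h3R : (q:ℝ) * (r:ℝ) - (p:ℝ) * (s:ℝ) = 1 := by exact_mod_cast h3
  have hsum : (ξ - (p:ℝ)/(q:ℝ)) + ((r:ℝ)/(s:ℝ) - ξ) = 1 / ((q:ℝ) * (s:ℝ)) := by
    field_simp
    linarith [h3R]
  have hx : 1 / (2 * (q:ℝ)^2) ≤ ξ - (p:ℝ)/(q:ℝ) := by
    rw [div_le_iff₀ (by positivity)]
    nlinarith [ha]
  have hy : 1 / (2 * (s:ℝ)^2) ≤ (r:ℝ)/(s:ℝ) - ξ := by
    rw [div_le_iff₀ (by positivity)]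
    nlinarith [hb]
  have hkey : 1 / (2 * (q:ℝ)^2) + 1 / (2 * (s:ℝ)^2) ≤ 1 / ((q:ℝ) * (s:ℝ)) := by
    linarith [hx, hy, hsum]
  have hqs : (q:ℝ) = (s:ℝ) := by
    rw [div_add_div _ _ (by positivity) (by positivity),
      div_le_div_iff₀ (by positivity) (by positivity)] at hkey
    have h0 : ((q:ℝ) - (s:ℝ))^2 ≤ 0 := by nlinarith [hkey, mul_pos hqR hsR]
    have h0' : ((q:ℝ) - (s:ℝ))^2 = 0 := le_antisymm h0 (sq_nonneg _)
    have := pow_eq_zero_iff (n := 2) (by norm_num) |>.mp h0'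
    linarith [this]
  have hxeq : ξ - (p:ℝ)/(q:ℝ) = 1 / (2 * (q:ℝ)^2) := by
    rw [hqs] at hsum hx ⊢
    have hh : 1 / ((s:ℝ) * (s:ℝ)) = 1 / (2 * (s:ℝ)^2) + 1 / (2 * (s:ℝ)^2) := by
      field_simp; ring
    linarith [hx, hy, hsum]
  have hξval : ξ = (p:ℝ)/(q:ℝ) + 1/(2*(q:ℝ)^2) := by linarith [hxeq]
  apply hξ
  refine ⟨(2*p*q+1 : ℚ)/(2*q^2 : ℚ), ?_⟩
  push_cast
  rw [hξval]
  field_simp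
end
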